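/- For all even integers n ≥ 4, each of AExc_n^+(t) = ∑_{π even in S_n} t^{exc(π)} and AExc_n^-(t) = ∑_{π odd in S_n} t^{exc(π)} can be written as a sum of two gamma positive polynomials whose centers of symmetry differ by one. -/

import Mathlib

open Finset Polynomial

/-- Number of excedances of a permutation of `{0,…,n-1}`. -/
def excA {n : ℕ} (π : Equiv.Perm (Fin n)) : ℕ :=
  (Finset.univ.filter (fun i => i < π i)).card

/-- Number of inversions. -/
def invA {n : ℕ} (π : Equiv.Perm (Fin n)) : ℕ :=
  (Finset.univ.filter (fun p : Fin n × Fin n => p.1 < p.2 ∧ π p.2 < π p.1)).card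

/-- `AExc_n^+(t)`, the excedance polynomial over even permutations. -/
noncomputable def AexcPt (n : ℕ) : Polynomial ℚ :=
  ∑ π ∈ Finset.univ.filter (fun π : Equiv.Perm (Fin n) => Even (invA π)),
    (Polynomial.X : Polynomial ℚ) ^ excA π

/-- `AExc_n^-(t)`, the excedance polynomial over odd permutations. -/
noncomputable def AexcMt (n : ℕ) : Polynomial ℚ :=
  ∑ π ∈ Finset.univ.filter (fun π : Equiv.Perm (Fin n) => ¬ Even (invA π)),
    (Polynomial.X : Polynomial ℚ) ^ excA π

/-- `f` is gamma positive with parameters `r ≤ N`: it has an expansion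
`f = ∑ γ_i t^{r+i}(1+t)^{N-r-2i}` with `γ_i ≥ 0`; its center of symmetry is `(N+r)/2`. -/
def IsGammaPos (f : Polynomial ℚ) (r N : ℕ) : Prop :=
  r ≤ N ∧ ∃ γ : ℕ → ℚ, (∀ i, 0 ≤ γ i) ∧
    f = ∑ i ∈ Finset.range ((N - r) / 2 + 1),
      Polynomial.C (γ i) * Polynomial.X ^ (r + i) * (1 + Polynomial.X) ^ (N - r - 2 * i)

/-- `f` is a sum of two gamma positive polynomials whose centers of symmetry
`(N₁+r₁)/2` and `(N₂+r₂)/2` differ by one. -/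
def SumOfTwoGammaPos (f : Polynomial ℚ) : Prop :=
  ∃ (p₁ p₂ : Polynomial ℚ) (r₁ N₁ r₂ N₂ : ℕ),
    IsGammaPos p₁ r₁ N₁ ∧ IsGammaPos p₂ r₂ N₂ ∧ f = p₁ + p₂ ∧
    N₂ + r₂ = N₁ + r₁ + 2

/-!
Write `A_n = ∑_{π ∈ S_n} t^{exc π}` and `D_n = ∑_{π ∈ S_n} sign(π) t^{exc π}`, so that
`AExc_n^± = (A_n ± D_n) / 2`. Every permutation of `{0, …, n}` arises exactly once from a
permutation `π` of `{1, …, n}` by making `0` a fixed point or inserting it into a cycle right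
after some letter `x`; the latter adds an excedance unless `x < π x`, and flips the sign. Hence
`A_{n+1} = (1 + n t) A_n + t(1-t) A_n'` and `D_{n+1} = (1 - n t) D_n - t(1-t) D_n'`, which give
`D_{n+1} = (1-t)^n` and the gamma expansion `A_{n+1} = ∑ γ_{n,j} t^j (1+t)^{n-2j}` with
`γ_{n,j} ≥ 0` given by a recurrence.

For `n = 2k+2`, `(1-t)^{2k} = ((1+t)^2 - 4t)^k` has gamma coefficients `c_j = (-4)^j C(k,j)`, so
`A_n ± D_n = ∑ t^j (1+t)^{2k-2j} ((γ_j ± c_j) + (γ_j ∓ c_j) t)`: a gamma positive polynomial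
with center `k` plus one with center `k+1`, provided `|c_j| ≤ γ_j`. That bound,
`4^j C(k,j) ≤ γ_{2k+1,j}`, follows from two steps of the recurrence by induction on `k`.
-/

open Equiv Equiv.Perm

section Sign

variable {n : ℕ}

theorem sign_eq_signAux (σ : Perm (Fin n)) : sign σ = signAux σ := by
  induction σ using swap_induction_on with
  | one => rw [Perm.sign_one, signAux_one]
  | swap_mul σ x y hxy ih => rw [Perm.sign_mul, signAux_mul, sign_swap hxy, signAux_swap hxy, ih]

theorem signAux_eq_neg_one_pow_invA (σ : Perm (Fin n)) : signAux σ = (-1) ^ invA σ := by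
  rw [signAux, prod_ite, prod_const, prod_const, one_pow, mul_one, invA]
  congr 1
  refine card_bij (fun p _ => (p.2, p.1)) ?_ ?_ ?_
  · rintro ⟨a, b⟩ hp
    obtain ⟨hba, hle⟩ := mem_filter.1 hp
    have hba : b < a := mem_finPairsLT.1 hba
    exact mem_filter.2 ⟨mem_univ _, hba, hle.lt_of_ne fun h => hba.ne' (σ.injective h)⟩
  · rintro ⟨a, b⟩ - ⟨a', b'⟩ - h
    simp only [Prod.mk.injEq] at h
    rw [h.1, h.2]
  · rintro ⟨b, a⟩ hp
    obtain ⟨-, hba, hlt⟩ := mem_filter.1 hp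
    exact ⟨⟨a, b⟩, mem_filter.2 ⟨mem_finPairsLT.2 hba, hlt.le⟩, rfl⟩

theorem sign_eq_neg_one_pow_invA (σ : Perm (Fin n)) : sign σ = (-1) ^ invA σ := by
  rw [sign_eq_signAux, signAux_eq_neg_one_pow_invA]

end Sign

section Insertion

variable {n : ℕ}

theorem excA_decomposeFin_symm_zero (e : Perm (Fin n)) :
    excA (decomposeFin.symm (0, e)) = excA e := by
  simp only [excA, card_filter, Fin.sum_univ_succ, decomposeFin_symm_apply_zero,
    decomposeFin_symm_apply_succ, swap_self, refl_apply, Fin.succ_lt_succ_iff, lt_self_iff_false,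
    if_false, zero_add]

theorem excA_decomposeFin_symm_succ (e : Perm (Fin n)) (x : Fin n) :
    excA (decomposeFin.symm ((e x).succ, e)) = if x < e x then excA e else excA e + 1 := by
  simp only [excA, card_filter, Fin.sum_univ_succ, decomposeFin_symm_apply_zero,
    decomposeFin_symm_apply_succ]
  have hshift : ∀ y, (if y.succ < swap 0 (e x).succ (e y).succ then 1 else 0)
      + (if y = x then (if x < e x then 1 else 0) else 0) = if y < e y then 1 else 0 := by
    intro y
    rcases eq_or_ne y x with rfl | hyx
    · simp
    · have hne : (e y).succ ≠ (e x).succ := by simpa using hyx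
      simp only [swap_apply_of_ne_of_ne (Fin.succ_ne_zero _) hne, Fin.succ_lt_succ_iff, if_neg hyx,
        add_zero]
  rw [← sum_congr rfl fun y _ => hshift y, sum_add_distrib, sum_ite_eq', if_pos (mem_univ x),
    if_pos (Fin.succ_pos _)]
  split_ifs <;> omega

theorem sum_perm_fin_succ {M : Type*} [AddCommMonoid M] (F : Perm (Fin (n + 1)) → M) :
    ∑ σ, F σ
      = ∑ e, (F (decomposeFin.symm (0, e)) + ∑ x, F (decomposeFin.symm ((e x).succ, e))) := by
  rw [← decomposeFin.symm.sum_comp, Fintype.sum_prod_type_right]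
  refine sum_congr rfl fun e _ => ?_
  rw [Fin.sum_univ_succ]
  exact congrArg _ (Equiv.sum_comp e fun q : Fin n => F (decomposeFin.symm (q.succ, e))).symm

end Insertion

section ExcedancePolynomials

variable (R : Type*) [CommRing R]

noncomputable def excPoly (n : ℕ) : R[X] := ∑ σ : Perm (Fin n), X ^ excA σ

noncomputable def signedExcPoly (n : ℕ) : R[X] :=
  ∑ σ : Perm (Fin n), ((sign σ : ℤ) : R[X]) * X ^ excA σ

noncomputable def eulerianOp (m : ℕ) : R[X] →ₗ[R] R[X] :=
  LinearMap.mulLeft R (1 + (m : R[X]) * X) + LinearMap.mulLeft R (X - X ^ 2) ∘ₗ derivative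

variable {R} {n : ℕ}

theorem eulerianOp_apply (m : ℕ) (f : R[X]) :
    eulerianOp R m f = (1 + (m : R[X]) * X) * f + (X - X ^ 2) * derivative f :=
  rfl

theorem sum_X_pow_excA_decomposeFin_symm_succ (e : Perm (Fin n)) :
    ∑ x, (X : R[X]) ^ excA (decomposeFin.symm ((e x).succ, e))
      = (n : R[X]) * X * X ^ excA e + (X - X ^ 2) * derivative (X ^ excA e) := by
  have hcard := card_filter_add_card_filter_not (s := univ) (p := fun x : Fin n => x < e x)
  rw [card_univ, Fintype.card_fin] at hcard
  simp only [excA_decomposeFin_symm_succ, apply_ite (fun m => (X : R[X]) ^ m), sum_ite,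
    sum_const, nsmul_eq_mul, derivative_X_pow, ← hcard, Nat.cast_add]
  rw [show (univ.filter fun x => x < e x).card = excA e from rfl]
  generalize excA e = a
  rcases a with _ | a
  · simp
  · simp only [Nat.add_sub_cancel, map_natCast]
    ring

theorem excPoly_succ : excPoly R (n + 1) = eulerianOp R n (excPoly R n) := by
  rw [eulerianOp_apply, excPoly, excPoly, sum_perm_fin_succ, map_sum, mul_sum, mul_sum,
    ← sum_add_distrib]
  refine sum_congr rfl fun e _ => ?_
  rw [excA_decomposeFin_symm_zero, sum_X_pow_excA_decomposeFin_symm_succ]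
  ring

theorem signedExcPoly_succ :
    signedExcPoly R (n + 1)
      = (1 - (n : R[X]) * X) * signedExcPoly R n
        - (X - X ^ 2) * derivative (signedExcPoly R n) := by
  rw [signedExcPoly, signedExcPoly, sum_perm_fin_succ, map_sum, mul_sum, mul_sum,
    ← sum_sub_distrib]
  refine sum_congr rfl fun e _ => ?_
  simp only [decomposeFin.symm_sign, if_neg (Fin.succ_ne_zero _), excA_decomposeFin_symm_zero,
    ← mul_sum, sum_X_pow_excA_decomposeFin_symm_succ, derivative_intCast_mul]
  push_cast
  ring

theorem signedExcPoly_succ_eq_one_sub_X_pow (n : ℕ) : signedExcPoly R (n + 1) = (1 - X) ^ n := by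
  induction n with
  | zero => simp [signedExcPoly, excA]
  | succ n ih =>
    rw [signedExcPoly_succ, ih, derivative_pow]
    rcases n with _ | n
    · simp
    · simp only [Nat.add_sub_cancel, derivative_sub, derivative_one, derivative_X, map_natCast]
      push_cast
      ring

end ExcedancePolynomials

-- The truncated `n - 2 * j` is harmless: `eulerGamma n j = 0` whenever `n < 2 * j`.
def eulerGamma : ℕ → ℕ → ℕ
  | _, 0 => 1
  | 0, _ + 1 => 0
  | n + 1, j + 1 => (j + 2) * eulerGamma n (j + 1) + 2 * (n - 2 * j) * eulerGamma n j

theorem eulerGamma_eq_zero {n j : ℕ} (h : n < 2 * j) : eulerGamma n j = 0 := by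
  induction n generalizing j with
  | zero => obtain ⟨j, rfl⟩ := Nat.exists_eq_add_one.2 (by omega : 0 < j); rfl
  | succ n ih =>
    obtain ⟨j, rfl⟩ := Nat.exists_eq_add_one.2 (by omega : 0 < j)
    rw [eulerGamma, ih (by omega), Nat.sub_eq_zero_of_le (by omega)]
    simp

theorem eulerGamma_le_succ (n j : ℕ) : eulerGamma n j ≤ eulerGamma (n + 1) j := by
  rcases j with _ | j
  · simp [eulerGamma]
  · rw [eulerGamma]
    nlinarith

theorem four_pow_mul_choose_le_eulerGamma (k j : ℕ) :
    4 ^ j * k.choose j ≤ eulerGamma (2 * k + 1) j := by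
  induction k generalizing j with
  | zero =>
    rcases j with _ | j
    · simp [eulerGamma]
    · simp
  | succ k ih =>
    rcases j with _ | j
    · simp [eulerGamma]
    rcases lt_or_ge k j with hkj | hjk
    · simp [Nat.choose_eq_zero_of_lt (by omega : k + 1 < j + 1)]
    have hmono := eulerGamma_le_succ (2 * k + 1) j
    have hmono' := eulerGamma_le_succ (2 * k + 1) (j + 1)
    have hgap : 4 ≤ 2 * (2 * k + 2 - 2 * j) := by omega
    calc 4 ^ (j + 1) * (k + 1).choose (j + 1)
        = 4 ^ (j + 1) * k.choose (j + 1) + 4 * (4 ^ j * k.choose j) := by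
          rw [Nat.choose_succ_succ']; ring
      _ ≤ eulerGamma (2 * k + 1) (j + 1) + 4 * eulerGamma (2 * k + 1) j := by gcongr <;> apply ih
      _ ≤ (j + 2) * eulerGamma (2 * k + 2) (j + 1)
            + 2 * (2 * k + 2 - 2 * j) * eulerGamma (2 * k + 2) j :=
          add_le_add (by nlinarith) (Nat.mul_le_mul hgap hmono)
      _ = eulerGamma (2 * (k + 1) + 1) (j + 1) := (eulerGamma.eq_3 (2 * k + 2) j).symm

section GammaExpansion

variable {R : Type*} [CommRing R]

theorem eulerianOp_X_pow_mul_one_add_X_pow (j e : ℕ) :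
    eulerianOp R (2 * j + e + 1) (X ^ j * (1 + X) ^ e)
      = (j + 1 : R[X]) * X ^ j * (1 + X) ^ (e + 1)
        + (2 * e : R[X]) * X ^ (j + 1) * (1 + X) ^ (e - 1) := by
  rw [eulerianOp_apply, Nat.cast_add, Nat.cast_add, Nat.cast_mul, Nat.cast_ofNat, Nat.cast_one,
    derivative_mul, derivative_X_pow, derivative_pow, derivative_add, derivative_one,
    derivative_X, zero_add, mul_one]
  rcases j with _ | j <;> rcases e with _ | e <;>
    simp only [Nat.add_sub_cancel, map_natCast] <;> push_cast <;> ring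

theorem excPoly_succ_eq_sum_eulerGamma (n : ℕ) :
    excPoly R (n + 1)
      = ∑ j ∈ range (n + 1), (eulerGamma n j : R[X]) * X ^ j * (1 + X) ^ (n - 2 * j) := by
  induction n with
  | zero => simp [excPoly, excA, eulerGamma]
  | succ n ih =>
    have hterm : ∀ j,
        eulerianOp R (n + 1) ((eulerGamma n j : R[X]) * X ^ j * (1 + X) ^ (n - 2 * j))
        = (((j + 1) * eulerGamma n j : ℕ) : R[X]) * X ^ j * (1 + X) ^ (n + 1 - 2 * j)
          + ((2 * (n - 2 * j) * eulerGamma n j : ℕ) : R[X]) * X ^ (j + 1)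
            * (1 + X) ^ (n + 1 - 2 * (j + 1)) := by
      intro j
      rcases le_or_gt (2 * j) n with h | h
      · obtain ⟨e, rfl⟩ := Nat.exists_eq_add_of_le h
        rw [show 2 * j + e - 2 * j = e by omega, show 2 * j + e + 1 - 2 * j = e + 1 by omega,
          show 2 * j + e + 1 - 2 * (j + 1) = e - 1 by omega, mul_assoc, ← nsmul_eq_mul, map_nsmul,
          eulerianOp_X_pow_mul_one_add_X_pow, nsmul_eq_mul]
        push_cast
        ring
      · simp [eulerGamma_eq_zero h]
    have hshift : ∑ j ∈ range (n + 1),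
          (((j + 1) * eulerGamma n j : ℕ) : R[X]) * X ^ j * (1 + X) ^ (n + 1 - 2 * j)
        = (1 + X) ^ (n + 1) + ∑ j ∈ range (n + 1),
          (((j + 2) * eulerGamma n (j + 1) : ℕ) : R[X]) * X ^ (j + 1)
            * (1 + X) ^ (n + 1 - 2 * (j + 1)) := by
      rw [sum_range_succ', sum_range_succ (n := n),
        eulerGamma_eq_zero (by omega : n < 2 * (n + 1))]
      simp only [eulerGamma.eq_1, mul_zero, Nat.cast_zero, zero_mul, add_zero, zero_add, mul_one,
        Nat.cast_one, pow_zero, one_mul, Nat.sub_zero]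
      exact add_comm _ _
    rw [excPoly_succ, ih, map_sum, sum_congr rfl fun j _ => hterm j, sum_add_distrib, hshift,
      sum_range_succ' _ (n + 1)]
    simp only [eulerGamma.eq_3, eulerGamma.eq_1, Nat.cast_add, add_mul, sum_add_distrib,
      Nat.cast_one, pow_zero, mul_one, Nat.mul_zero, Nat.sub_zero]
    ring

end GammaExpansion

theorem one_sub_pow_two_mul {R : Type*} [CommRing R] (x : R) (k : ℕ) :
    (1 - x) ^ (2 * k)
      = ∑ j ∈ range (k + 1),
          (-4) ^ j * (k.choose j : R) * x ^ j * (1 + x) ^ (2 * k - 2 * j) := by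
  rw [pow_mul, show (1 - x) ^ 2 = -4 * x + (1 + x) ^ 2 by ring, add_pow]
  refine sum_congr rfl fun j _ => ?_
  rw [← Nat.mul_sub, pow_mul, mul_pow]
  ring

theorem excPoly_eq_AexcPt_add_AexcMt (n : ℕ) : excPoly ℚ n = AexcPt n + AexcMt n :=
  (sum_filter_add_sum_filter_not _ _ _).symm

theorem signedExcPoly_eq_AexcPt_sub_AexcMt (n : ℕ) :
    signedExcPoly ℚ n = AexcPt n - AexcMt n := by
  rw [signedExcPoly, AexcPt, AexcMt,
    ← sum_filter_add_sum_filter_not univ (fun σ => Even (invA σ)),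
    sub_eq_add_neg, ← sum_neg_distrib]
  congr 1 <;> refine sum_congr rfl fun σ hσ => ?_ <;>
    rw [sign_eq_neg_one_pow_invA]
  · rw [(mem_filter.1 hσ).2.neg_one_pow]
    simp
  · rw [(Nat.not_even_iff_odd.1 (mem_filter.1 hσ).2).neg_one_pow]
    simp

theorem sumOfTwoGammaPos_of_two_mul_eq {f : ℚ[X]} (k : ℕ) (a c : ℕ → ℚ)
    (hca : ∀ j, |c j| ≤ a j)
    (hf : 2 * f = ∑ j ∈ range (k + 1), C (a j) * X ^ j * (1 + X) ^ (2 * k + 1 - 2 * j)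
      + (1 - X) * ∑ j ∈ range (k + 1), C (c j) * X ^ j * (1 + X) ^ (2 * k - 2 * j)) :
    SumOfTwoGammaPos f := by
  have hrange₁ : (2 * k - 0) / 2 + 1 = k + 1 := by omega
  have hrange₂ : (2 * k + 1 - 1) / 2 + 1 = k + 1 := by omega
  refine ⟨_, _, 0, 2 * k, 1, 2 * k + 1,
    ⟨by omega, fun j => (a j + c j) / 2, fun j => by linarith [abs_le.1 (hca j)], rfl⟩,
    ⟨by omega, fun j => (a j - c j) / 2, fun j => by linarith [abs_le.1 (hca j)], rfl⟩, ?_,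
    by ring⟩
  refine mul_left_cancel₀ (two_ne_zero : (2 : ℚ[X]) ≠ 0) ?_
  rw [hf, hrange₁, hrange₂, mul_add, mul_sum, mul_sum, mul_sum, ← sum_add_distrib,
    ← sum_add_distrib]
  refine sum_congr rfl fun j hj => ?_
  have hjk : j ≤ k := Nat.lt_succ_iff.1 (mem_range.1 hj)
  have hhalf : ∀ b : ℚ, (2 : ℚ[X]) * C (b / 2) = C b := fun b => by
    rw [← map_ofNat C 2, ← C_mul, mul_div_cancel₀ b two_ne_zero]
  have hu := hhalf (a j + c j)
  have hv := hhalf (a j - c j)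
  rw [C_add] at hu
  rw [C_sub] at hv
  rw [show 2 * k + 1 - 2 * j = 2 * k - 2 * j + 1 by omega,
    show 2 * k - 0 - 2 * j = 2 * k - 2 * j by omega,
    show 2 * k + 1 - 1 - 2 * j = 2 * k - 2 * j by omega]
  linear_combination -(X ^ j * (1 + X) ^ (2 * k - 2 * j)) * hu
    - (X ^ (1 + j) * (1 + X) ^ (2 * k - 2 * j)) * hv

section EvenLength

variable {R : Type*} [CommRing R]

theorem excPoly_two_mul_add_two (k : ℕ) :
    excPoly R (2 * k + 2) = ∑ j ∈ range (k + 1),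
      (eulerGamma (2 * k + 1) j : R[X]) * X ^ j * (1 + X) ^ (2 * k + 1 - 2 * j) := by
  rw [excPoly_succ_eq_sum_eulerGamma]
  refine (sum_subset (range_subset_range.2 (by omega)) fun j _ hj => ?_).symm
  rw [eulerGamma_eq_zero (by simp at hj; omega), Nat.cast_zero, zero_mul, zero_mul]

theorem signedExcPoly_two_mul_add_two (k : ℕ) :
    signedExcPoly R (2 * k + 2) = (1 - X) * ∑ j ∈ range (k + 1),
      (-4) ^ j * (k.choose j : R[X]) * X ^ j * (1 + X) ^ (2 * k - 2 * j) := by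
  rw [signedExcPoly_succ_eq_one_sub_X_pow, pow_succ', one_sub_pow_two_mul]

end EvenLength

theorem stmt8 (n : ℕ) (hn : 4 ≤ n) (heven : Even n) :
    SumOfTwoGammaPos (AexcPt n) ∧ SumOfTwoGammaPos (AexcMt n) := by
  obtain ⟨k, rfl⟩ : ∃ k, n = 2 * k + 2 := by
    obtain ⟨t, rfl⟩ := heven
    exact ⟨t - 1, by omega⟩
  have hA := excPoly_two_mul_add_two (R := ℚ) k
  have hD := signedExcPoly_two_mul_add_two (R := ℚ) k
  rw [excPoly_eq_AexcPt_add_AexcMt] at hA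
  rw [signedExcPoly_eq_AexcPt_sub_AexcMt] at hD
  have hbound : ∀ j, |(-4 : ℚ) ^ j * k.choose j| ≤ eulerGamma (2 * k + 1) j := fun j => by
    rw [abs_mul, abs_pow, abs_neg, Nat.abs_cast]
    exact_mod_cast four_pow_mul_choose_le_eulerGamma k j
  constructor
  · refine sumOfTwoGammaPos_of_two_mul_eq k _ _ hbound ?_
    simp only [map_natCast, map_mul, map_pow, map_neg, map_ofNat]
    linear_combination hA + hD
  · refine sumOfTwoGammaPos_of_two_mul_eq k _ (fun j => -((-4 : ℚ) ^ j * k.choose j))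
      (fun j => (abs_neg _).trans_le (hbound j)) ?_
    simp only [map_natCast, map_mul, map_pow, map_neg, map_ofNat, neg_mul, sum_neg_distrib]
    linear_combination hA - hD
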